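/- Let F be a free group of rank 2, let p be a prime, let P_1 = F and P_{n+1} = P_n^p [F, P_n] be the lower p-central series of F, and for n ≥ 2 let U_n = {(x, y) ∈ F × F : x P_n = y P_n}. Then there exists a surjective group homomorphism from U_n onto P_n / P_{n+1}; consequently d(U_n) ≥ a_n, where p^{a_n} = |P_n / P_{n+1}| and d(U_n) is the least cardinality of a generating set of U_n. -/

import Mathlib

/-- One step of the lower `p`-central series: `N ↦ N^p [F, N]`, the subgroup generated
by `p`-th powers of elements of `N` together with commutators `[f, x]`, `f ∈ F`, `x ∈ N`. -/
def pStep {F : Type*} [Group F] (p : ℕ) (N : Subgroup F) : Subgroup F :=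
  Subgroup.closure ((fun x => x ^ p) '' (N : Set F)) ⊔ ⁅(⊤ : Subgroup F), N⁆

/-- Auxiliary recursion: `pAux F p k` is the `(k+1)`-st term of the lower `p`-central
series of `F`. -/
def pAux (F : Type*) [Group F] (p : ℕ) : ℕ → Subgroup F
  | 0 => ⊤
  | k + 1 => pStep p (pAux F p k)

/-- The lower `p`-central series `P_1 = F`, `P_{n+1} = P_n^p [F, P_n]`
(indexed so that `pcs F p n` is `P_n`; the value at `0` is junk, equal to `P_1 = F`). -/
def pcs (F : Type*) [Group F] (p : ℕ) (n : ℕ) : Subgroup F := pAux F p (n - 1)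

theorem closure_conjInvariant_normal {F : Type*} [Group F] {s : Set F}
    (hs : ∀ g : F, ∀ x ∈ s, g * x * g⁻¹ ∈ s) : (Subgroup.closure s).Normal := by
  constructor
  intro n hn g
  have h1 : (Subgroup.closure s).map (MulAut.conj g).toMonoidHom ≤ Subgroup.closure s := by
    rw [MonoidHom.map_closure]
    apply Subgroup.closure_mono
    rintro _ ⟨x, hx, rfl⟩
    exact hs g x hx
  exact h1 ⟨n, hn, rfl⟩

instance pAux_normal (F : Type*) [Group F] (p k : ℕ) : (pAux F p k).Normal := by
  induction k with
  | zero => exact inferInstanceAs (⊤ : Subgroup F).Normal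
  | succ k ih =>
    show (pStep p (pAux F p k)).Normal
    have h1 : (Subgroup.closure ((fun x => x ^ p) '' ((pAux F p k) : Set F))).Normal := by
      apply closure_conjInvariant_normal
      rintro g _ ⟨x, hx, rfl⟩
      exact ⟨g * x * g⁻¹, ih.conj_mem x hx g, conj_pow⟩
    haveI := h1
    exact Subgroup.sup_normal _ _
  
instance pcs_normal (F : Type*) [Group F] (p n : ℕ) : (pcs F p n).Normal :=
  pAux_normal F p (n - 1)

theorem pAux_succ_le (F : Type*) [Group F] (p k : ℕ) : pAux F p (k + 1) ≤ pAux F p k := by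
  apply sup_le
  · rw [Subgroup.closure_le]
    rintro _ ⟨x, hx, rfl⟩
    exact (pAux F p k).pow_mem hx p
  · exact Subgroup.commutator_le_right ⊤ (pAux F p k)

theorem pcs_succ_le (F : Type*) [Group F] (p n : ℕ) : pcs F p (n + 1) ≤ pcs F p n := by
  cases n with
  | zero => exact le_rfl
  | succ n => exact pAux_succ_le F p n

/-- The diagonal subgroup of `Q × Q`. -/
def diagSubgroup (Q : Type*) [Group Q] : Subgroup (Q × Q) :=
  ((MonoidHom.id Q).prod (MonoidHom.id Q)).range

/-- The fiber product `U_n = {(x, y) ∈ F × F : x P_n = y P_n}`, where `P_n` is the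
lower `p`-central series of `F`. -/
def fiberU (F : Type*) [Group F] (p n : ℕ) : Subgroup (F × F) :=
  Subgroup.comap
    ((QuotientGroup.mk' (pcs F p n)).prodMap (QuotientGroup.mk' (pcs F p n)))
    (diagSubgroup (F ⧸ pcs F p n))

/-- `d K` is the least cardinality of a (finite) generating set of the group `K`. -/
noncomputable def minGens (K : Type*) [Group K] : ℕ :=
  sInf {n : ℕ | ∃ S : Finset K, S.card = n ∧ Subgroup.closure (S : Set K) = ⊤}

/-! The map `(x, y) ↦ x⁻¹ y` sends `U_n` onto `P_n`, and modulo `P_{n+1}` it is a homomorphism: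
`(x x')⁻¹ (y y') = x'⁻¹ (x⁻¹ y) x' · x'⁻¹ y'`, and conjugation acts trivially on `P_n / P_{n+1}`
because `[F, P_n] ≤ P_{n+1}`. The quotient `P_n / P_{n+1}` is abelian of exponent `p`, so a
generating set with `d` elements produces at most `p ^ d` elements; pushing a minimal generating set
of `U_n` forward gives `p ^ a_n ≤ p ^ d(U_n)`. For `d(U_n)` to be attained (rather than the junk
value `sInf ∅ = 0`) we need `U_n` finitely generated: it contains `P_n × P_n`, of finite index in
`F × F`, since inductively each `P_k / P_{k+1}` is a finitely generated abelian group of exponent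
`p`, hence finite. -/

open Subgroup

open scoped commutatorElement IsMulCommutative

section QuotientSubgroupOf

variable {G : Type*} [Group G] {N M : Subgroup G}

theorem isMulCommutative_quotient_subgroupOf [M.Normal] (h : ⁅N, N⁆ ≤ M) :
    IsMulCommutative (N ⧸ M.subgroupOf N) := by
  refine ⟨⟨fun x y => ?_⟩⟩
  induction x using QuotientGroup.induction_on with | H a => ?_
  induction y using QuotientGroup.induction_on with | H b => ?_
  rw [← QuotientGroup.mk_mul, ← QuotientGroup.mk_mul, QuotientGroup.eq, mem_subgroupOf]
  have hab : (((a * b)⁻¹ * (b * a) : N) : G) = ⁅(b : G)⁻¹, (a : G)⁻¹⁆ := by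
    simp only [coe_mul, coe_inv, commutatorElement_def]
    group
  rw [hab]
  exact h (commutator_mem_commutator (inv_mem b.2) (inv_mem a.2))

theorem pow_eq_one_of_pow_mem [M.Normal] {p : ℕ} (h : ∀ x ∈ N, x ^ p ∈ M)
    (q : N ⧸ M.subgroupOf N) : q ^ p = 1 := by
  induction q using QuotientGroup.induction_on with | H a => ?_
  rw [← QuotientGroup.mk_pow, QuotientGroup.eq_one_iff, mem_subgroupOf, coe_pow]
  exact h a a.2

def invMulQuotientHom [M.Normal] (hNM : ⁅(⊤ : Subgroup G), N⁆ ≤ M) (U : Subgroup (G × G))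
    (hU : ∀ u ∈ U, u.1⁻¹ * u.2 ∈ N) : U →* N ⧸ M.subgroupOf N :=
  MonoidHom.mk' (fun u => QuotientGroup.mk (⟨u.1.1⁻¹ * u.1.2, hU u u.2⟩ : N)) fun u v => by
    rw [← QuotientGroup.mk_mul, QuotientGroup.eq, mem_subgroupOf]
    obtain ⟨⟨a, b⟩, hu⟩ := u
    obtain ⟨⟨c, d⟩, hv⟩ := v
    have hcomm : ⁅c⁻¹, (a⁻¹ * b)⁻¹⁆ ∈ M :=
      hNM (commutator_mem_commutator (mem_top _) (inv_mem (hU _ hu)))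
    convert (inferInstance : M.Normal).conj_mem' _ hcomm (c⁻¹ * d) using 1
    simp only [coe_mul, coe_inv, MulMemClass.mk_mul_mk, Prod.mk_mul_mk, commutatorElement_def]
    group

theorem invMulQuotientHom_surjective [M.Normal] (hNM : ⁅(⊤ : Subgroup G), N⁆ ≤ M)
    {U : Subgroup (G × G)} (hU : ∀ u ∈ U, u.1⁻¹ * u.2 ∈ N) (hN : ∀ k ∈ N, ((1 : G), k) ∈ U) :
    Function.Surjective (invMulQuotientHom hNM U hU) := by
  intro q
  induction q using QuotientGroup.induction_on with | H k => ?_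
  exact ⟨⟨(1, k), hN k k.2⟩, congrArg QuotientGroup.mk (Subtype.ext (by simp))⟩

end QuotientSubgroupOf

section Exponent

variable {Q : Type*} [CommGroup Q] {p : ℕ}

theorem prod_pow_surjective_of_pow_eq_one (hp : 0 < p) (hpow : ∀ x : Q, x ^ p = 1) {S : Finset Q}
    (hS : closure (S : Set Q) = ⊤) :
    Function.Surjective fun e : S → Fin p => ∏ s : S, (s : Q) ^ (e s : ℕ) := by
  intro x
  have hx : x ∈ Submonoid.closure (S : Set Q) := by
    rw [← closure_toSubmonoid_of_isOfFinOrder fun y _ =>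
      isOfFinOrder_iff_pow_eq_one.mpr ⟨p, hp, hpow y⟩, hS]
    exact mem_top x
  obtain ⟨e, rfl⟩ := Submonoid.mem_closure_finset'.mp hx
  exact ⟨fun s => ⟨e s % p, Nat.mod_lt _ hp⟩,
    Finset.prod_congr rfl fun s _ => (pow_eq_pow_mod _ (hpow s)).symm⟩

theorem finite_of_pow_eq_one [Group.FG Q] (hp : 0 < p) (hpow : ∀ x : Q, x ^ p = 1) :
    Finite Q := by
  obtain ⟨S, -, hS⟩ := Group.rank_spec Q
  exact Finite.of_surjective _ (prod_pow_surjective_of_pow_eq_one hp hpow hS)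

theorem card_le_pow_rank_of_pow_eq_one [Group.FG Q] (hp : 0 < p) (hpow : ∀ x : Q, x ^ p = 1) :
    Nat.card Q ≤ p ^ Group.rank Q := by
  obtain ⟨S, hcard, hS⟩ := Group.rank_spec Q
  calc Nat.card Q ≤ Nat.card (S → Fin p) :=
        Nat.card_le_card_of_surjective _ (prod_pow_surjective_of_pow_eq_one hp hpow hS)
    _ = p ^ Group.rank Q := by rw [Nat.card_fun, Nat.card_eq_finsetCard, hcard, Nat.card_fin]

end Exponent

section LowerPCentral

variable {G : Type*} [Group G] {p : ℕ}

theorem pow_mem_pcs_succ {n : ℕ} {x : G} (hx : x ∈ pcs G p n) : x ^ p ∈ pcs G p (n + 1) := by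
  cases n with
  | zero => exact mem_top _
  | succ n => exact le_sup_left (α := Subgroup G) (subset_closure ⟨x, hx, rfl⟩)

theorem commutator_top_pcs_le (n : ℕ) : ⁅(⊤ : Subgroup G), pcs G p n⁆ ≤ pcs G p (n + 1) := by
  cases n with
  | zero => exact le_top
  | succ n => exact le_sup_right

theorem mem_fiberU {n : ℕ} {u : G × G} : u ∈ fiberU G p n ↔ u.1⁻¹ * u.2 ∈ pcs G p n := by
  simp [fiberU, diagSubgroup, Prod.ext_iff, QuotientGroup.eq]

instance (n : ℕ) : IsMulCommutative (pcs G p n ⧸ (pcs G p (n + 1)).subgroupOf (pcs G p n)) :=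
  isMulCommutative_quotient_subgroupOf
    ((commutator_mono le_top le_rfl).trans (commutator_top_pcs_le n))

theorem pcs_quotient_pow_eq_one (n : ℕ)
    (q : pcs G p n ⧸ (pcs G p (n + 1)).subgroupOf (pcs G p n)) : q ^ p = 1 :=
  pow_eq_one_of_pow_mem (fun _ => pow_mem_pcs_succ) q

theorem finiteIndex_pcs [Group.FG G] (hp : 0 < p) : ∀ n, (pcs G p n).FiniteIndex
  | 0 => inferInstanceAs (⊤ : Subgroup G).FiniteIndex
  | n + 1 => by
    have := finiteIndex_pcs hp n
    have : Group.FG (pcs G p n) := fg_of_index_ne_zero _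
    have := finite_of_pow_eq_one hp (pcs_quotient_pow_eq_one (G := G) n)
    refine ⟨?_⟩
    rw [← relIndex_mul_index (pcs_succ_le G p n)]
    exact mul_ne_zero index_ne_zero_of_finite FiniteIndex.index_ne_zero

theorem finiteIndex_fiberU [Group.FG G] (hp : 0 < p) (n : ℕ) : (fiberU G p n).FiniteIndex := by
  have := finiteIndex_pcs (G := G) hp n
  refine finiteIndex_of_le (H := (pcs G p n).prod (pcs G p n)) fun u hu => ?_
  rw [mem_prod] at hu
  exact mem_fiberU.mpr (mul_mem (inv_mem hu.1) hu.2)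

end LowerPCentral

theorem minGens_eq_rank (K : Type*) [Group K] [Group.FG K] : minGens K = Group.rank K := by
  obtain ⟨S, hS, hSc⟩ := Group.rank_spec K
  refine le_antisymm (Nat.sInf_le ⟨S, hS, hSc⟩) (le_csInf ⟨_, S, hS, hSc⟩ ?_)
  rintro _ ⟨T, rfl, hT⟩
  exact Group.rank_le hT

theorem stmt14_general (p : ℕ) (hp : p.Prime) (n : ℕ) (a : ℕ → ℕ)
    (ha : p ^ a n =
      (pcs (FreeGroup (Fin 2)) p (n + 1)).relIndex (pcs (FreeGroup (Fin 2)) p n)) :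
    (∃ ψ : fiberU (FreeGroup (Fin 2)) p n →*
        (pcs (FreeGroup (Fin 2)) p n ⧸
          (pcs (FreeGroup (Fin 2)) p (n + 1)).subgroupOf (pcs (FreeGroup (Fin 2)) p n)),
      Function.Surjective ψ) ∧
    a n ≤ minGens (fiberU (FreeGroup (Fin 2)) p n) := by
  set F := FreeGroup (Fin 2)
  have hsurj := invMulQuotientHom_surjective (U := fiberU F p n) (commutator_top_pcs_le n)
    (fun _ => mem_fiberU.mp) fun k hk => mem_fiberU.mpr (by rwa [inv_one, one_mul])
  refine ⟨⟨_, hsurj⟩, ?_⟩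
  have := finiteIndex_fiberU (G := F) hp.pos n
  have : Group.FG (fiberU F p n) := fg_of_index_ne_zero _
  have := Group.fg_of_surjective hsurj
  rw [minGens_eq_rank, ← Nat.pow_le_pow_iff_right hp.one_lt, ha]
  calc (pcs F p (n + 1)).relIndex (pcs F p n)
      ≤ p ^ Group.rank (pcs F p n ⧸ (pcs F p (n + 1)).subgroupOf (pcs F p n)) :=
        card_le_pow_rank_of_pow_eq_one hp.pos (pcs_quotient_pow_eq_one n)
    _ ≤ p ^ Group.rank (fiberU F p n) :=
        Nat.pow_le_pow_right hp.pos (Group.rank_le_of_surjective _ hsurj)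

/-- for the free group `F` of rank 2, a prime `p`, the lower `p`-central
series `P_n` of `F`, and `U_n = {(x,y) : x P_n = y P_n}` (`n ≥ 2`), the group `U_n`
surjects onto `P_n / P_{n+1}`; consequently `d(U_n) ≥ a_n` where
`p ^ (a n) = |P_n / P_{n+1}|`. -/
theorem stmt14 (p : ℕ) (hp : p.Prime) (n : ℕ) (hn : 2 ≤ n) (a : ℕ → ℕ)
    (ha : p ^ a n =
      (pcs (FreeGroup (Fin 2)) p (n + 1)).relIndex (pcs (FreeGroup (Fin 2)) p n)) :
    (∃ ψ : fiberU (FreeGroup (Fin 2)) p n →*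
        (pcs (FreeGroup (Fin 2)) p n ⧸
          (pcs (FreeGroup (Fin 2)) p (n + 1)).subgroupOf (pcs (FreeGroup (Fin 2)) p n)),
      Function.Surjective ψ) ∧
    a n ≤ minGens (fiberU (FreeGroup (Fin 2)) p n) :=
  stmt14_general p hp n a ha
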